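/- Proposition 3.1: Suppose P : ℤ^d_{≥0} × [0,∞) → ℝ solves the chemical master equation and there is a function c : [0,∞) → ℝ^d_{>0} such that P(x,t) = ∏_{i=1}^d e^{−c_i(t)} c_i(t)^{x_i}/x_i! for all x ∈ ℤ^d_{≥0} and t ≥ 0. Then c is differentiable and is the solution of the deterministic mass-action ODE c'(t) = Σ_k κ_k c(t)^{y_k} ζ_k with initial condition c(0). -/

import Mathlib

open Finset

/-- Monomial `u^v = ∏ i, u i ^ v i` (with the convention `0^0 = 1`). -/
noncomputable def monPow {d : ℕ} (u : Fin d → ℝ) (v : Fin d → ℕ) : ℝ :=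
  ∏ i, u i ^ v i

/-- The reaction vector `ζ = y' - y`, viewed as a real vector. -/
def zetaVec {d : ℕ} (y y' : Fin d → ℕ) : Fin d → ℝ :=
  fun i => (y' i : ℝ) - (y i : ℝ)

/-- Stochastic mass action intensity `λ_k(x) = κ_k ∏_i x_i!/(x_i - y_{ki})!`,
taken to be `0` when `x` is not componentwise at least `y_k`. -/
noncomputable def intensity {d : ℕ} (κk : ℝ) (yk : Fin d → ℕ) (x : Fin d → ℕ) : ℝ :=
  κk * ∏ i, ((x i).descFactorial (yk i) : ℝ)

/-- Right-hand side of the deterministic mass-action ODE: `Σ_k κ_k c^{y_k} ζ_k`. -/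
noncomputable def massActionRHS {d K : ℕ} (κ : Fin K → ℝ) (y y' : Fin K → Fin d → ℕ)
    (c : Fin d → ℝ) : Fin d → ℝ :=
  ∑ k, (κ k * monPow c (y k)) • zetaVec (y k) (y' k)

/-- `c` is differentiable on `[0,∞)` and solves the mass-action ODE there. -/
def solvesMassAction {d K : ℕ} (κ : Fin K → ℝ) (y y' : Fin K → Fin d → ℕ)
    (c : ℝ → Fin d → ℝ) : Prop :=
  ∀ t ≥ (0:ℝ), HasDerivWithinAt c (massActionRHS κ y y' (c t)) (Set.Ici 0) t

/-- The dynamical and restricted (DR) complex balance condition: for every complex `z`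
with `‖z‖₁ ≥ 2` and every `t ≥ 0`,
`Σ_{k : y_k = z} κ_k c(t)^z = Σ_{k : y'_k = z} κ_k c(t)^{y_k}`. -/
def DRcondition {d K : ℕ} (κ : Fin K → ℝ) (y y' : Fin K → Fin d → ℕ)
    (c : ℝ → Fin d → ℝ) : Prop :=
  ∀ z : Fin d → ℕ, 2 ≤ ∑ i, z i → ∀ t ≥ (0:ℝ),
    ∑ k ∈ univ.filter (fun k => y k = z), κ k * monPow (c t) z
      = ∑ k ∈ univ.filter (fun k => y' k = z), κ k * monPow (c t) (y k)

/-- `P` solves the chemical master equation on `[0,∞)`: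
`∂ₜ P(x,t) = Σ_k λ_k(x-ζ_k) P(x-ζ_k,t) 1{x-ζ_k ≥ 0} - Σ_k λ_k(x) P(x,t)`. -/
def solvesCME {d K : ℕ} (κ : Fin K → ℝ) (y y' : Fin K → Fin d → ℕ)
    (P : (Fin d → ℕ) → ℝ → ℝ) : Prop :=
  ∀ x : Fin d → ℕ, ∀ t ≥ (0:ℝ),
    HasDerivWithinAt (P x)
      ((∑ k, if ∀ i, y' k i ≤ x i + y k i then
          intensity (κ k) (y k) (fun i => x i + y k i - y' k i)
            * P (fun i => x i + y k i - y' k i) t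
        else 0)
       - ∑ k, intensity (κ k) (y k) x * P x t)
      (Set.Ici 0) t

/-- The product-Poisson probability mass function `∏_i e^{-c_i} c_i^{x_i}/x_i!`. -/
noncomputable def productPoisson {d : ℕ} (c : Fin d → ℝ) (x : Fin d → ℕ) : ℝ :=
  ∏ i, Real.exp (-(c i)) * (c i) ^ (x i) / (x i).factorial

/-!
Write `Q_c` for the product-Poisson law with mean `c`. Since `c_m = Q_c(e_m) / Q_c(0)`, the CME
forces `c` to be differentiable, and then `∂ₜ Q_{c(t)}(x) = Q_{c(t)}(x) · Σᵢ (xᵢ ċᵢ / cᵢ - ċᵢ)`.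
A shifted Poisson weight is again a Poisson weight times a falling factorial, so dividing the CME
by `Q_{c(t)}(x)` leaves an identity between combinations of the falling factorials
`(x)_v = ∏ᵢ (xᵢ)_{vᵢ}` that holds for every `x ∈ ℕ^d`:
`Σₘ (ċₘ / cₘ) (x)_{eₘ} - Σₘ ċₘ = Σₖ κₖ c^{yₖ} c^{-y'ₖ} (x)_{y'ₖ} - Σₖ κₖ (x)_{yₖ}`.
The mixed forward difference `Δ^z` at the origin sends `(x)_v` to `z! [z = v]`, so a finite
combination of them is a linear functional taking `(x)_v` to `vⱼ c^v` on all complexes involved.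
Applying it to the identity gives `ċⱼ = Σₖ κₖ c^{yₖ} (y'ₖⱼ - yₖⱼ)`.
-/

theorem sum_range_alternating_choose_mul_descFactorial (n m : ℕ) :
    ∑ w ∈ range (n + 1), (-1 : ℝ) ^ (n - w) * n.choose w * w.descFactorial m =
      if n = m then (n.factorial : ℝ) else 0 := by
  have h := fwdDiff_iter_choose_zero m n
  rw [fwdDiff_iter_eq_sum_shift] at h
  have h' := congrArg (fun z : ℤ => (m.factorial : ℝ) * z) h
  simp only [zero_add, mul_one, smul_eq_mul, Int.cast_sum, Int.cast_mul,
    Int.cast_pow, Int.cast_neg, Int.cast_one, Int.cast_natCast, mul_sum] at h'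
  simp only [Nat.descFactorial_eq_factorial_mul_choose, Nat.cast_mul]
  split_ifs at h' ⊢ with hnm
  · subst hnm; simpa [mul_comm, mul_left_comm, mul_assoc] using h'
  · simpa [mul_comm, mul_left_comm, mul_assoc] using h'

noncomputable def fallingPow {d : ℕ} (v x : Fin d → ℕ) : ℝ :=
  ∏ i, ((x i).descFactorial (v i) : ℝ)

/-- The mixed forward difference `f ↦ (Δ_{e₁}^{z₁} ⋯ Δ_{e_d}^{z_d} f)(0)`, expanded binomially. -/

theorem fallingPow_zero {d : ℕ} : fallingPow (0 : Fin d → ℕ) = 1 := by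
  ext x; simp [fallingPow]

theorem fallingPow_single {d : ℕ} (m : Fin d) (x : Fin d → ℕ) :
    fallingPow (Pi.single m 1) x = x m := by
  simp [fallingPow, Pi.single_apply, apply_ite]

noncomputable def mvFwdDiffZero {d : ℕ} (z : Fin d → ℕ) : ((Fin d → ℕ) → ℝ) →ₗ[ℝ] ℝ :=
  ∑ w ∈ Fintype.piFinset fun i => range (z i + 1),
    (∏ i, (-1 : ℝ) ^ (z i - w i) * (z i).choose (w i)) • LinearMap.proj w

theorem mvFwdDiffZero_fallingPow {d : ℕ} (z v : Fin d → ℕ) :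
    mvFwdDiffZero z (fallingPow v) = if z = v then ∏ i, ((z i).factorial : ℝ) else 0 := by
  simp only [mvFwdDiffZero, LinearMap.sum_apply, LinearMap.smul_apply,
    LinearMap.coe_proj, Function.eval, smul_eq_mul, fallingPow, ← prod_mul_distrib]
  rw [← prod_univ_sum (fun i => range (z i + 1))
    (fun i w => (-1 : ℝ) ^ (z i - w) * (z i).choose w * w.descFactorial (v i))]
  simp only [sum_range_alternating_choose_mul_descFactorial, Fintype.prod_ite_zero]
  by_cases h : z = v
  · simp [h]
  · rw [if_neg (mt funext h), if_neg h]

theorem sum_smul_mvFwdDiffZero_fallingPow {d : ℕ} {Z : Finset (Fin d → ℕ)} {v : Fin d → ℕ}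
    (hv : v ∈ Z) (w : (Fin d → ℕ) → ℝ) :
    (∑ z ∈ Z, (w z / ∏ i, ((z i).factorial : ℝ)) • mvFwdDiffZero z) (fallingPow v) = w v := by
  have hfact : ∏ i, ((v i).factorial : ℝ) ≠ 0 :=
    prod_ne_zero_iff.2 fun i _ => Nat.cast_ne_zero.2 (v i).factorial_ne_zero
  simp only [LinearMap.sum_apply, LinearMap.smul_apply,
    mvFwdDiffZero_fallingPow, smul_eq_mul, mul_ite, mul_zero, sum_ite_eq', if_pos hv]
  exact div_mul_cancel₀ _ hfact

theorem monPow_single {d : ℕ} (u : Fin d → ℝ) (m : Fin d) : monPow u (Pi.single m 1) = u m := by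
  simp [monPow, Pi.single_apply, Finset.prod_ite_eq']

theorem monPow_ne_zero {d : ℕ} {u : Fin d → ℝ} (hu : ∀ i, u i ≠ 0) (v : Fin d → ℕ) :
    monPow u v ≠ 0 :=
  prod_ne_zero_iff.2 fun i _ => pow_ne_zero _ (hu i)

theorem massActionRHS_apply {d K : ℕ} (κ : Fin K → ℝ) (y y' : Fin K → Fin d → ℕ)
    (c : Fin d → ℝ) (j : Fin d) :
    massActionRHS κ y y' c j = ∑ k, κ k * monPow c (y k) * ((y' k j : ℝ) - y k j) := by
  simp [massActionRHS, zetaVec]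

theorem eq_massActionRHS_of_fallingPow_identity {d K : ℕ} {κ : Fin K → ℝ}
    {y y' : Fin K → Fin d → ℕ} {c : Fin d → ℝ} (hc : ∀ i, c i ≠ 0) {δ : Fin d → ℝ}
    (h : ∑ m, (δ m / c m) • fallingPow (Pi.single m 1) - (∑ m, δ m) • fallingPow 0 =
      ∑ k, (κ k * (monPow c (y k) / monPow c (y' k))) • fallingPow (y' k)
        - ∑ k, κ k • fallingPow (y k)) :
    δ = massActionRHS κ y y' c := by
  classical
  funext j
  set Z : Finset (Fin d → ℕ) :=
    insert 0 (univ.image (Pi.single · 1) ∪ univ.image y ∪ univ.image y')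
  set Λ : ((Fin d → ℕ) → ℝ) →ₗ[ℝ] ℝ :=
    ∑ z ∈ Z, ((z j * monPow c z : ℝ) / ∏ i, ((z i).factorial : ℝ)) • mvFwdDiffZero z
  have hΛ : ∀ v ∈ Z, Λ (fallingPow v) = v j * monPow c v :=
    fun v hv => sum_smul_mvFwdDiffZero_fallingPow hv _
  have := congrArg Λ h
  simp (disch := simp [Z]) only [map_sub, map_sum, map_smul, hΛ] at this
  simp only [monPow_single, Pi.single_apply, smul_eq_mul] at this
  rw [massActionRHS_apply]
  have hlhs : ∑ m, δ m / c m * (((if j = m then 1 else 0 : ℕ) : ℝ) * c m) = δ j := by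
    simp [hc]
  simp only [hlhs, Pi.zero_apply, Nat.cast_zero, zero_mul, mul_zero, sub_zero] at this
  rw [this, ← sum_sub_distrib]
  refine sum_congr rfl fun k _ => ?_
  field_simp [monPow_ne_zero hc (y' k)]

theorem descFactorial_mul_exp_neg_mul_pow_div_factorial {a : ℝ} (ha : a ≠ 0) {X Y Y' : ℕ}
    (h : Y' ≤ X + Y) :
    ((X + Y - Y').descFactorial Y : ℝ) *
        (Real.exp (-a) * a ^ (X + Y - Y') / (X + Y - Y').factorial) =
      a ^ Y / a ^ Y' * X.descFactorial Y' * (Real.exp (-a) * a ^ X / X.factorial) := by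
  rcases le_or_gt Y' X with hX | hX
  · obtain ⟨B, rfl⟩ := Nat.exists_eq_add_of_le' hX
    rw [show B + Y' + Y - Y' = B + Y by omega]
    have h1 := Nat.factorial_mul_descFactorial (Nat.le_add_left Y B)
    have h2 := Nat.factorial_mul_descFactorial (Nat.le_add_left Y' B)
    rw [Nat.add_sub_cancel] at h1 h2
    rw [← h1, ← h2]
    have hB : (B.factorial : ℝ) ≠ 0 := Nat.cast_ne_zero.2 B.factorial_ne_zero
    have hD1 : ((B + Y).descFactorial Y : ℝ) ≠ 0 :=
      Nat.cast_ne_zero.2 (Nat.descFactorial_eq_zero_iff_lt.not.2 (by omega))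
    have hD2 : ((B + Y').descFactorial Y' : ℝ) ≠ 0 :=
      Nat.cast_ne_zero.2 (Nat.descFactorial_eq_zero_iff_lt.not.2 (by omega))
    push_cast
    field_simp
    ring
  · rw [Nat.descFactorial_eq_zero_iff_lt.2 (by omega), Nat.descFactorial_eq_zero_iff_lt.2 hX]
    simp

theorem transition_mul_productPoisson {d : ℕ} {c : Fin d → ℝ} (hc : ∀ i, c i ≠ 0) (κk : ℝ)
    (yk y'k x : Fin d → ℕ) :
    (if ∀ i, y'k i ≤ x i + yk i then
        intensity κk yk (fun i => x i + yk i - y'k i) *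
          productPoisson c (fun i => x i + yk i - y'k i)
      else 0) =
      κk * (monPow c yk / monPow c y'k) * fallingPow y'k x * productPoisson c x := by
  split_ifs with h
  · simp only [intensity, productPoisson, monPow, fallingPow, ← prod_div_distrib, mul_assoc,
      ← prod_mul_distrib]
    congr 1
    refine prod_congr rfl fun i _ => ?_
    rw [descFactorial_mul_exp_neg_mul_pow_div_factorial (hc i) (h i), mul_assoc]
  · push Not at h
    obtain ⟨i, hi⟩ := h
    have : fallingPow y'k x = 0 := prod_eq_zero (mem_univ i) (by simp; omega)
    simp [this]

noncomputable def cmeRHS {d K : ℕ} (κ : Fin K → ℝ) (y y' : Fin K → Fin d → ℕ)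
    (p : (Fin d → ℕ) → ℝ) (x : Fin d → ℕ) : ℝ :=
  (∑ k, if ∀ i, y' k i ≤ x i + y k i then
      intensity (κ k) (y k) (fun i => x i + y k i - y' k i) * p (fun i => x i + y k i - y' k i)
    else 0)
   - ∑ k, intensity (κ k) (y k) x * p x

theorem cmeRHS_productPoisson {d K : ℕ} (κ : Fin K → ℝ) (y y' : Fin K → Fin d → ℕ)
    {c : Fin d → ℝ} (hc : ∀ i, c i ≠ 0) (x : Fin d → ℕ) :
    cmeRHS κ y y' (productPoisson c) x = productPoisson c x *
      (∑ k, κ k * (monPow c (y k) / monPow c (y' k)) * fallingPow (y' k) x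
        - ∑ k, κ k * fallingPow (y k) x) := by
  simp only [cmeRHS, transition_mul_productPoisson hc, mul_sub, mul_sum]
  congr 1 <;> refine sum_congr rfl fun k _ => ?_ <;> simp only [intensity, fallingPow] <;> ring

theorem productPoisson_ne_zero {d : ℕ} {u : Fin d → ℝ} (hu : ∀ i, u i ≠ 0) (x : Fin d → ℕ) :
    productPoisson u x ≠ 0 :=
  prod_ne_zero_iff.2 fun i _ =>
    div_ne_zero (mul_ne_zero (Real.exp_pos _).ne' (pow_ne_zero _ (hu i)))
      (Nat.cast_ne_zero.2 (x i).factorial_ne_zero)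

theorem productPoisson_zero_pos {d : ℕ} (u : Fin d → ℝ) : 0 < productPoisson u 0 := by
  simp only [productPoisson, Pi.zero_apply, pow_zero, mul_one, Nat.factorial_zero, Nat.cast_one,
    div_one]
  positivity

theorem productPoisson_single_div_zero {d : ℕ} (u : Fin d → ℝ) (m : Fin d) :
    productPoisson u (Pi.single m 1) / productPoisson u 0 = u m := by
  rw [div_eq_iff (productPoisson_zero_pos u).ne']
  have hfactor : ∀ i, Real.exp (-u i) * u i ^ (Pi.single m 1 : Fin d → ℕ) i /
      ((Pi.single m 1 : Fin d → ℕ) i).factorial = (if i = m then u i else 1) *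
        (Real.exp (-u i) * u i ^ (0 : Fin d → ℕ) i / ((0 : Fin d → ℕ) i).factorial) := by
    intro i
    rcases eq_or_ne i m with rfl | h <;> simp [*, mul_comm]
  simp only [productPoisson, hfactor, prod_mul_distrib, Fintype.prod_ite_eq']

theorem differentiableWithinAt_of_productPoisson {d : ℕ} {c : ℝ → Fin d → ℝ} {s : Set ℝ} {t : ℝ}
    (h : ∀ x, DifferentiableWithinAt ℝ (fun τ => productPoisson (c τ) x) s t) :
    DifferentiableWithinAt ℝ c s t :=
  differentiableWithinAt_pi.2 fun m => by
    simpa only [Pi.div_def, productPoisson_single_div_zero] using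
      (h (Pi.single m 1)).div (h 0) (productPoisson_zero_pos _).ne'

theorem hasDerivWithinAt_exp_neg_mul_pow_div_factorial {a : ℝ → ℝ} {a' : ℝ} {s : Set ℝ} {t : ℝ}
    (ha : HasDerivWithinAt a a' s t) (ht : a t ≠ 0) (n : ℕ) :
    HasDerivWithinAt (fun τ => Real.exp (-a τ) * a τ ^ n / n.factorial)
      (Real.exp (-a t) * a t ^ n / n.factorial * (n * a' / a t - a')) s t := by
  refine ((ha.neg.exp.mul (ha.pow n)).div_const _).congr_deriv ?_
  rcases n with _ | n
  · simp
  · simp only [Pi.neg_apply, Pi.pow_apply, Nat.add_sub_cancel]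
    field_simp
    ring

theorem hasDerivWithinAt_productPoisson {d : ℕ} {c : ℝ → Fin d → ℝ} {δ : Fin d → ℝ} {s : Set ℝ}
    {t : ℝ} (hc : HasDerivWithinAt c δ s t) (ht : ∀ i, c t i ≠ 0) (x : Fin d → ℕ) :
    HasDerivWithinAt (fun τ => productPoisson (c τ) x)
      (productPoisson (c t) x * ∑ i, (x i * δ i / c t i - δ i)) s t := by
  classical
  have := HasDerivWithinAt.fun_finsetProd (u := univ) fun i _ =>
    hasDerivWithinAt_exp_neg_mul_pow_div_factorial (hasDerivWithinAt_pi.1 hc i) (ht i) (x i)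
  refine this.congr_deriv ?_
  simp only [productPoisson, mul_sum, smul_eq_mul, ← mul_assoc, prod_erase_mul _ _ (mem_univ _)]

theorem hasDerivWithinAt_massActionRHS_of_productPoisson {d K : ℕ} {κ : Fin K → ℝ}
    {y y' : Fin K → Fin d → ℕ} {c : ℝ → Fin d → ℝ} {s : Set ℝ} {t : ℝ}
    (hs : UniqueDiffWithinAt ℝ s t) (hc : ∀ i, c t i ≠ 0)
    (hQ : ∀ x, HasDerivWithinAt (fun τ => productPoisson (c τ) x)
      (cmeRHS κ y y' (productPoisson (c t)) x) s t) :
    HasDerivWithinAt c (massActionRHS κ y y' (c t)) s t := by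
  obtain ⟨δ, hδ⟩ : ∃ δ, HasDerivWithinAt c δ s t :=
    ⟨_, (differentiableWithinAt_of_productPoisson fun x =>
      (hQ x).differentiableWithinAt).hasDerivWithinAt⟩
  suffices hδ_eq : δ = massActionRHS κ y y' (c t) from hδ_eq ▸ hδ
  refine eq_massActionRHS_of_fallingPow_identity hc (funext fun x => ?_)
  have hx := hs.eq_deriv _ (hQ x) (hasDerivWithinAt_productPoisson hδ hc x)
  rw [cmeRHS_productPoisson κ y y' hc, mul_right_inj' (productPoisson_ne_zero hc x)] at hx
  simp only [Pi.sub_apply, Finset.sum_apply, Pi.smul_apply, smul_eq_mul, fallingPow_single,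
    fallingPow_zero, Pi.one_apply, mul_one, hx, sum_sub_distrib]
  congr 1
  exact sum_congr rfl fun i _ => by ring

theorem productPoisson_solution_implies_massAction_general
    {d K : ℕ} (κ : Fin K → ℝ) (y y' : Fin K → Fin d → ℕ)
    (P : (Fin d → ℕ) → ℝ → ℝ) (c : ℝ → Fin d → ℝ)
    (hcpos : ∀ t ≥ (0:ℝ), ∀ i, 0 < c t i)
    (hCME : solvesCME κ y y' P)
    (hPoisson : ∀ x : Fin d → ℕ, ∀ t ≥ (0:ℝ), P x t = productPoisson (c t) x) :
    solvesMassAction κ y y' c := by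
  intro t ht
  refine hasDerivWithinAt_massActionRHS_of_productPoisson (uniqueDiffOn_Ici 0 t ht)
    (fun i => (hcpos t ht i).ne') fun x => ?_
  have hP : (fun z => P z t) = productPoisson (c t) := funext fun z => hPoisson z t ht
  have hx : HasDerivWithinAt (P x) (cmeRHS κ y y' (fun z => P z t) x) (Set.Ici 0) t :=
    hCME x t ht
  rw [hP] at hx
  exact hx.congr (fun s hs => (hPoisson x s hs).symm) (hPoisson x t ht).symm

/-- Proposition 3.1: if a solution of the chemical master equation is a product of Poissons
with mean vector `c(t) > 0`, then `c` is differentiable and solves the deterministic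
mass-action ODE with initial condition `c(0)`. -/
theorem productPoisson_solution_implies_massAction
    {d K : ℕ} (κ : Fin K → ℝ) (y y' : Fin K → Fin d → ℕ)
    (hκ : ∀ k, 0 ≤ κ k) (hyy' : ∀ k, y' k ≠ y k)
    (P : (Fin d → ℕ) → ℝ → ℝ) (c : ℝ → Fin d → ℝ)
    (hcpos : ∀ t ≥ (0:ℝ), ∀ i, 0 < c t i)
    (hCME : solvesCME κ y y' P)
    (hPoisson : ∀ x : Fin d → ℕ, ∀ t ≥ (0:ℝ), P x t = productPoisson (c t) x) :
    solvesMassAction κ y y' c :=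
  productPoisson_solution_implies_massAction_general κ y y' P c hcpos hCME hPoisson
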